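/- arXiv:1406.4466 — 2 statements merged into one kernel-verified Lean document; each statement's English description precedes it below -/
import Mathlib

section
/- Let D be a connected oriented graph with vertex set {1,...,n}, and let r_1,...,r_n and a_e ≤ b_e (for e ∈ A(D)) be integers. Then there exist integers x_e with a_e ≤ x_e ≤ b_e (for e ∈ A(D)) such that Σ_{i=1}^n r_i f_i = Σ_{e∈A(D)} x_e w(e), if and only if: (1) r_1 + ⋯ + r_n = 0; and (2) for every nonempty proper subset I of {1,...,n} such that the induced subgraphs of D on I and on {1,...,n}\I are connected, one has Σ_{i∈I} r_i ≤ Σ_{e=(i→j), i∈I, j∉I} b_e − Σ_{e=(i→j), i∉I, j∈I} a_e. -/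
/-!
Existence of an integral `x` with `a ≤ x ≤ b` and net outflow `r` is Hoffman's circulation
theorem: it holds iff `∑ r = 0` and `∑_{i ∈ S} r i ≤ cap S` for every vertex set `S`, where
`cap S` is `b` summed over the arcs leaving `S` minus `a` summed over the arcs entering `S`.
Sufficiency is by induction on `∑ (b - a)`: submodularity of `cap` shows that one bound of a slack
arc can be moved by one without violating any cut condition.

The slack `cap S - ∑_{i ∈ S} r i` is additive over unions of vertex sets not joined by an arc and,
passing to the reversed network, over complements of such unions. Splitting off a maximal
connected part of `S`, or of its complement, therefore reduces every cut condition to those where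
both `S` and its complement induce connected subgraphs; connectivity of the graph keeps the pieces
connected.
-/

open scoped Classical

noncomputable section

/-- The column `f_i - f_j` (over ℤ) of the directed incidence matrix corresponding to
an arc `e = (i → j)`. -/
def arcVecZ {n : ℕ} (i j : Fin n) : Fin n → ℤ := fun k =>
  (if k = i then 1 else 0) - (if k = j then 1 else 0)

lemma arcVecZ_eq_single_sub_single {n : ℕ} (i j : Fin n) :
    arcVecZ i j = Pi.single i 1 - Pi.single j 1 := by
  funext k
  simp [arcVecZ, Pi.single_apply]

namespace SimpleGraph

variable {V : Type*} {G : SimpleGraph V}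

lemma Preconnected.exists_adj_of_mem_of_notMem (hG : G.Preconnected) {s : Set V} {u v : V}
    (hu : u ∈ s) (hv : v ∉ s) : ∃ x ∈ s, ∃ y ∉ s, G.Adj x y := by
  obtain ⟨p⟩ := hG u v
  obtain ⟨d, -, hd₁, hd₂⟩ := p.exists_boundary_dart s hu hv
  exact ⟨d.fst, hd₁, d.snd, hd₂, d.adj⟩

lemma Preconnected.connected_induce_compl (hG : G.Preconnected) {s t : Set V}
    (hs : (G.induce s).Connected) (hst : Disjoint s t) (ht : ∀ u ∈ t, ∀ v, G.Adj u v → v ∈ s ∪ t) :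
    (G.induce tᶜ).Connected := by
  have hsub : s ⊆ tᶜ := hst.subset_compl_right
  have hreach : ∀ v w (_ : G.Walk v w) (hv : v ∈ tᶜ) (hw : w ∈ s),
      (G.induce tᶜ).Reachable ⟨v, hv⟩ ⟨w, hsub hw⟩ := by
    intro v w p
    induction p with
    | nil => exact fun _ _ => Reachable.refl _
    | @cons v x w hvx _ ih =>
      intro hv hw
      by_cases hx : x ∈ t
      · have hvs : v ∈ s := (ht x hx v hvx.symm).resolve_right hv
        exact (hs.preconnected ⟨v, hvs⟩ ⟨w, hw⟩).map (induceHomOfLE G hsub).toHom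
      · exact (Adj.reachable (by simpa using hvx) : (G.induce tᶜ).Reachable ⟨v, hv⟩ ⟨x, hx⟩).trans
          (ih hx hw)
  obtain ⟨⟨i, hi⟩⟩ := hs.nonempty
  rw [connected_iff_exists_forall_reachable]
  exact ⟨⟨i, hsub hi⟩, fun ⟨v, hv⟩ => (hreach v i (hG v i).some hv hi).symm⟩

lemma exists_connected_subset_forall_not_adj [DecidableEq V] {S : Finset V} (hS : S.Nonempty) :
    ∃ A ⊆ S, (G.induce (A : Set V)).Connected ∧ ∀ u ∈ A, ∀ v ∈ S \ A, ¬ G.Adj u v := by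
  obtain ⟨v, hv⟩ := hS
  have hne : (S.powerset.filter fun A : Finset V => (G.induce (A : Set V)).Connected).Nonempty :=
    ⟨{v}, Finset.mem_filter.2 ⟨by simpa using hv, by
      rw [Finset.coe_singleton, induce_singleton_eq_top]; exact connected_top⟩⟩
  obtain ⟨A, hA, hmax⟩ := Finset.exists_maximal hne
  simp only [Finset.mem_filter, Finset.mem_powerset] at hA hmax
  refine ⟨A, hA.1, hA.2, fun u hu w hw huw => ?_⟩
  rw [Finset.mem_sdiff] at hw
  have hconn : (G.induce (insert w A : Finset V)).Connected := by
    rw [Finset.coe_insert, Set.insert_eq, Set.union_comm]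
    refine connected_induce_union hA.2.preconnected ?_ hu rfl huw
    simp [induce_singleton_eq_top]
  exact hw.2 (hmax ⟨Finset.insert_subset hw.1 hA.1, hconn⟩ (Finset.subset_insert w A)
    (Finset.mem_insert_self w A))

variable [Fintype V] [DecidableEq V] {g : Finset V → ℤ}

lemma Preconnected.nonneg_of_induce_connected (hG : G.Preconnected)
    (hcompl_union : ∀ A B, Disjoint A B → (∀ u ∈ A, ∀ v ∈ B, ¬ G.Adj u v) →
      g (A ∪ B)ᶜ = g Aᶜ + g Bᶜ)
    (hnonneg : ∀ I : Finset V, (G.induce (I : Set V)).Connected →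
      (G.induce (I : Set V)ᶜ).Connected → 0 ≤ g I)
    {I : Finset V} (hI : (G.induce (I : Set V)).Connected) : 0 ≤ g I := by
  suffices ∀ J : Finset V, (G.induce (Jᶜ : Set V)).Connected → 0 ≤ g Jᶜ by
    simpa using this Iᶜ (by rwa [Finset.coe_compl, compl_compl])
  intro J
  induction J using Finset.strongInduction with
  | H J ih =>
  intro hJ
  obtain rfl | hJne := J.eq_empty_or_nonempty
  · have := hcompl_union ∅ ∅ (by simp) (by simp)
    rw [Finset.empty_union] at this
    linarith
  obtain ⟨A, hAJ, hA, hAB⟩ := exists_connected_subset_forall_not_adj (G := G) hJne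
  rw [← Finset.union_sdiff_of_subset hAJ, hcompl_union A (J \ A) Finset.disjoint_sdiff hAB]
  obtain ⟨⟨u, hu⟩⟩ := hA.nonempty
  obtain ⟨⟨w, hw⟩⟩ := hJ.nonempty
  have hAc : (G.induce (Aᶜ : Set V)).Connected := by
    refine hG.connected_induce_compl hJ (Set.disjoint_compl_left_iff_subset.2 hAJ) ?_
    intro x hx y hxy
    by_contra hy
    simp only [Set.mem_union, Set.mem_compl_iff, Finset.mem_coe, not_or, not_not] at hy
    exact hAB x hx y (Finset.mem_sdiff.2 hy) hxy
  have hJAc : (G.induce ((J \ A)ᶜ : Set V)).Connected := by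
    obtain ⟨x, hx, y, hy, hxy⟩ :=
      hG.exists_adj_of_mem_of_notMem (s := A) hu fun hwA => hw (hAJ hwA)
    have hyJ : y ∉ J := fun hyJ => hAB x hx y (Finset.mem_sdiff.2 ⟨hyJ, hy⟩) hxy
    rw [Set.compl_sdiff]
    exact connected_induce_union hA.preconnected hJ.preconnected hx hyJ hxy
  have hlt : J \ A ⊂ J := Finset.sdiff_ssubset hAJ ⟨u, hu⟩
  exact add_nonneg (hnonneg Aᶜ (by rwa [Finset.coe_compl]) (by rwa [Finset.coe_compl, compl_compl]))
    (ih _ hlt (by rwa [Finset.coe_sdiff]))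

lemma Preconnected.nonneg_of_nonneg_of_induce_connected (hG : G.Preconnected)
    (hunion : ∀ A B, Disjoint A B → (∀ u ∈ A, ∀ v ∈ B, ¬ G.Adj u v) → g (A ∪ B) = g A + g B)
    (hcompl_union : ∀ A B, Disjoint A B → (∀ u ∈ A, ∀ v ∈ B, ¬ G.Adj u v) →
      g (A ∪ B)ᶜ = g Aᶜ + g Bᶜ)
    (hnonneg : ∀ I : Finset V, (G.induce (I : Set V)).Connected →
      (G.induce (I : Set V)ᶜ).Connected → 0 ≤ g I)
    (S : Finset V) : 0 ≤ g S := by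
  induction S using Finset.strongInduction with
  | H S ih =>
  obtain rfl | hSne := S.eq_empty_or_nonempty
  · have := hunion ∅ ∅ (by simp) (by simp)
    rw [Finset.empty_union] at this
    linarith
  obtain ⟨A, hAS, hA, hAB⟩ := exists_connected_subset_forall_not_adj (G := G) hSne
  obtain ⟨⟨u, hu⟩⟩ := hA.nonempty
  rw [← Finset.union_sdiff_of_subset hAS, hunion A (S \ A) Finset.disjoint_sdiff hAB]
  exact add_nonneg (hG.nonneg_of_induce_connected hcompl_union hnonneg hA)
    (ih _ (Finset.sdiff_ssubset hAS ⟨u, hu⟩))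

end SimpleGraph

section Network

variable {V E : Type*} [DecidableEq V]

def arcCapacity (α β : ℤ) (u v : V) (S : Finset V) : ℤ :=
  (if u ∈ S ∧ v ∉ S then β else 0) - if u ∉ S ∧ v ∈ S then α else 0

lemma arcCapacity_self (α : ℤ) (u v : V) (S : Finset V) :
    arcCapacity α α u v S = α * ((if u ∈ S then 1 else 0) - if v ∈ S then 1 else 0) := by
  unfold arcCapacity; split_ifs <;> simp_all

lemma arcCapacity_mono {α α' β β' : ℤ} (hα : α' ≤ α) (hβ : β ≤ β') (u v : V) (S : Finset V) :
    arcCapacity α β u v S ≤ arcCapacity α' β' u v S := by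
  unfold arcCapacity; split_ifs <;> omega

lemma arcCapacity_add_left (α β c : ℤ) (u v : V) (S : Finset V) :
    arcCapacity (α + c) β u v S = arcCapacity α β u v S - if u ∉ S ∧ v ∈ S then c else 0 := by
  unfold arcCapacity; split_ifs <;> ring

lemma arcCapacity_sub_right (α β c : ℤ) (u v : V) (S : Finset V) :
    arcCapacity α (β - c) u v S = arcCapacity α β u v S - if u ∈ S ∧ v ∉ S then c else 0 := by
  unfold arcCapacity; split_ifs <;> ring

lemma arcCapacity_union_add_inter_le {α β : ℤ} (h : α ≤ β) (u v : V) (S T : Finset V) :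
    arcCapacity α β u v (S ∪ T) + arcCapacity α β u v (S ∩ T) ≤
      arcCapacity α β u v S + arcCapacity α β u v T := by
  unfold arcCapacity
  by_cases hu : u ∈ S <;> by_cases hv : v ∈ S <;> by_cases hu' : u ∈ T <;> by_cases hv' : v ∈ T <;>
    simp [*]

lemma arcCapacity_union {A B : Finset V} (hAB : Disjoint A B) {u v : V}
    (huv : ¬ (u ∈ A ∧ v ∈ B)) (hvu : ¬ (u ∈ B ∧ v ∈ A)) (α β : ℤ) :
    arcCapacity α β u v (A ∪ B) = arcCapacity α β u v A + arcCapacity α β u v B := by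
  have huAB : ¬ (u ∈ A ∧ u ∈ B) := fun h => Finset.disjoint_left.1 hAB h.1 h.2
  have hvAB : ¬ (v ∈ A ∧ v ∈ B) := fun h => Finset.disjoint_left.1 hAB h.1 h.2
  unfold arcCapacity
  by_cases hu : u ∈ A <;> by_cases hv : v ∈ A <;> by_cases hu' : u ∈ B <;> by_cases hv' : v ∈ B <;>
    simp_all

lemma arcCapacity_compl [Fintype V] (α β : ℤ) (u v : V) (S : Finset V) :
    arcCapacity α β u v Sᶜ = arcCapacity α β v u S := by
  unfold arcCapacity; simp only [Finset.mem_compl, not_not]; split_ifs <;> simp_all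

variable [Fintype E] (tl hd : E → V)

def netOutflow (x : E → ℤ) : V → ℤ :=
  ∑ e, x e • (Pi.single (tl e) 1 - Pi.single (hd e) 1)

def cutCapacity (a b : E → ℤ) (S : Finset V) : ℤ :=
  ∑ e, arcCapacity (a e) (b e) (tl e) (hd e) S

lemma sum_netOutflow (x : E → ℤ) (S : Finset V) :
    ∑ k ∈ S, netOutflow tl hd x k = cutCapacity tl hd x x S := by
  simp only [netOutflow, cutCapacity, arcCapacity_self, Finset.sum_apply, Pi.smul_apply,
    Pi.sub_apply, smul_eq_mul]
  rw [Finset.sum_comm]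
  simp [← Finset.mul_sum, Finset.sum_pi_single']

lemma cutCapacity_univ [Fintype V] (a b : E → ℤ) : cutCapacity tl hd a b Finset.univ = 0 := by
  simp [cutCapacity, arcCapacity]

lemma cutCapacity_mono {a a' b b' : E → ℤ} (ha : a' ≤ a) (hb : b ≤ b') (S : Finset V) :
    cutCapacity tl hd a b S ≤ cutCapacity tl hd a' b' S :=
  Finset.sum_le_sum fun e _ => arcCapacity_mono (ha e) (hb e) _ _ _

lemma cutCapacity_add_single_left (a b : E → ℤ) (e₀ : E) (S : Finset V) :
    cutCapacity tl hd (a + Pi.single e₀ 1) b S =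
      cutCapacity tl hd a b S - if tl e₀ ∉ S ∧ hd e₀ ∈ S then 1 else 0 := by
  simp only [cutCapacity, Pi.add_apply, arcCapacity_add_left, Finset.sum_sub_distrib]
  congr 1
  rw [Fintype.sum_eq_single e₀ fun e he => by simp [he]]
  simp

lemma cutCapacity_sub_single_right (a b : E → ℤ) (e₀ : E) (S : Finset V) :
    cutCapacity tl hd a (b - Pi.single e₀ 1) S =
      cutCapacity tl hd a b S - if tl e₀ ∈ S ∧ hd e₀ ∉ S then 1 else 0 := by
  simp only [cutCapacity, Pi.sub_apply, arcCapacity_sub_right, Finset.sum_sub_distrib]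
  congr 1
  rw [Fintype.sum_eq_single e₀ fun e he => by simp [he]]
  simp

lemma cutCapacity_union_add_inter_add_le {a b : E → ℤ} (hab : a ≤ b) {S T : Finset V} {e₀ : E}
    (hS : tl e₀ ∉ S ∧ hd e₀ ∈ S) (hT : tl e₀ ∈ T ∧ hd e₀ ∉ T) :
    cutCapacity tl hd a b (S ∪ T) + cutCapacity tl hd a b (S ∩ T) + (b e₀ - a e₀) ≤
      cutCapacity tl hd a b S + cutCapacity tl hd a b T := by
  let c e X := arcCapacity (a e) (b e) (tl e) (hd e) X
  have hc : ∀ e,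
      c e (S ∪ T) + c e (S ∩ T) + (if e = e₀ then b e₀ - a e₀ else 0) ≤ c e S + c e T := by
    intro e
    split_ifs with he
    · subst he
      simp [c, arcCapacity, hS, hT]
    · simpa using arcCapacity_union_add_inter_le (hab e) (tl e) (hd e) S T
  simpa [c, cutCapacity, Finset.sum_add_distrib] using
    Finset.sum_le_sum fun e (_ : e ∈ Finset.univ) => hc e

lemma netOutflow_eq_of_forall_sum_le_cutCapacity_self [Fintype V] {x : E → ℤ} {r : V → ℤ}
    (hr : ∑ i, r i = 0) (hcut : ∀ S, ∑ i ∈ S, r i ≤ cutCapacity tl hd x x S) :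
    netOutflow tl hd x = r := by
  have hle : ∀ k, r k ≤ netOutflow tl hd x k := fun k => by
    simpa [← sum_netOutflow] using hcut {k}
  have hsum : ∑ k, r k = ∑ k, netOutflow tl hd x k := by
    rw [hr, sum_netOutflow, cutCapacity_univ]
  funext k
  exact ((Finset.sum_eq_sum_iff_of_le fun k _ => hle k).1 hsum k (Finset.mem_univ k)).symm

lemma forall_sum_le_cutCapacity_add_single_or_sub_single [Fintype V] {a b : E → ℤ} {r : V → ℤ}
    (hab : a ≤ b) {e₀ : E} (he₀ : a e₀ < b e₀)
    (hcut : ∀ S, ∑ i ∈ S, r i ≤ cutCapacity tl hd a b S) :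
    (∀ S, ∑ i ∈ S, r i ≤ cutCapacity tl hd (a + Pi.single e₀ 1) b S) ∨
      ∀ S, ∑ i ∈ S, r i ≤ cutCapacity tl hd a (b - Pi.single e₀ 1) S := by
  by_contra! h
  obtain ⟨⟨S, hS⟩, ⟨T, hT⟩⟩ := h
  rw [cutCapacity_add_single_left] at hS
  rw [cutCapacity_sub_single_right] at hT
  have hS_in : tl e₀ ∉ S ∧ hd e₀ ∈ S := by
    by_contra h
    rw [if_neg h] at hS
    linarith [hcut S]
  have hT_out : tl e₀ ∈ T ∧ hd e₀ ∉ T := by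
    by_contra h
    rw [if_neg h] at hT
    linarith [hcut T]
  rw [if_pos hS_in] at hS
  rw [if_pos hT_out] at hT
  -- `S` and `T` are tight, and submodularity with gap `b e₀ - a e₀ > 0` at `e₀` then violates the
  -- cut condition for `S ∪ T` or for `S ∩ T`.
  linarith [cutCapacity_union_add_inter_add_le tl hd hab hS_in hT_out, hcut (S ∪ T),
    hcut (S ∩ T), Finset.sum_union_inter (s₁ := S) (s₂ := T) (f := r)]

theorem exists_netOutflow_eq_of_forall_sum_le_cutCapacity [Fintype V] {r : V → ℤ}
    (hr : ∑ i, r i = 0) {a b : E → ℤ} (hab : a ≤ b)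
    (hcut : ∀ S, ∑ i ∈ S, r i ≤ cutCapacity tl hd a b S) :
    ∃ x, a ≤ x ∧ x ≤ b ∧ netOutflow tl hd x = r := by
  obtain rfl | hne := eq_or_ne a b
  · exact ⟨a, le_rfl, le_rfl, netOutflow_eq_of_forall_sum_le_cutCapacity_self tl hd hr hcut⟩
  obtain ⟨e₀, he₀⟩ : ∃ e₀, a e₀ < b e₀ := by
    by_contra! h
    exact hne (le_antisymm hab h)
  have hslack_pos : 0 < ∑ e, (b e - a e) :=
    lt_of_lt_of_le (sub_pos.2 he₀)
      (Finset.single_le_sum (fun e _ => sub_nonneg.2 (hab e)) (Finset.mem_univ e₀))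
  rcases forall_sum_le_cutCapacity_add_single_or_sub_single tl hd hab he₀ hcut with h | h
  · have hab' : a + Pi.single e₀ 1 ≤ b := fun e => by
      rcases eq_or_ne e e₀ with rfl | he
      · simpa using he₀
      · simpa [he] using hab e
    have hslack : ∑ e, (b e - (a + Pi.single e₀ 1 : E → ℤ) e) = ∑ e, (b e - a e) - 1 := by
      simp [sub_add_eq_sub_sub, Finset.sum_sub_distrib]
    have : (∑ e, (b e - (a + Pi.single e₀ 1 : E → ℤ) e)).toNat < (∑ e, (b e - a e)).toNat := by
      omega
    obtain ⟨x, hax, hxb, hx⟩ := exists_netOutflow_eq_of_forall_sum_le_cutCapacity hr hab' h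
    exact ⟨x, le_trans (le_add_of_nonneg_right (Pi.single_nonneg.2 zero_le_one)) hax, hxb, hx⟩
  · have hab' : a ≤ b - Pi.single e₀ 1 := fun e => by
      rcases eq_or_ne e e₀ with rfl | he
      · simpa [Int.le_sub_one_iff] using he₀
      · simpa [he] using hab e
    have hslack : ∑ e, ((b - Pi.single e₀ 1 : E → ℤ) e - a e) = ∑ e, (b e - a e) - 1 := by
      simp [Finset.sum_sub_distrib, sub_right_comm _ (1 : ℤ)]
    have : (∑ e, ((b - Pi.single e₀ 1 : E → ℤ) e - a e)).toNat < (∑ e, (b e - a e)).toNat := by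
      omega
    obtain ⟨x, hax, hxb, hx⟩ := exists_netOutflow_eq_of_forall_sum_le_cutCapacity hr hab' h
    exact ⟨x, hax, le_trans hxb (sub_le_self _ (Pi.single_nonneg.2 zero_le_one)), hx⟩
termination_by (∑ e, (b e - a e)).toNat
decreasing_by all_goals assumption

theorem exists_netOutflow_eq_iff [Fintype V] {a b : E → ℤ} (hab : a ≤ b) (r : V → ℤ) :
    (∃ x, a ≤ x ∧ x ≤ b ∧ netOutflow tl hd x = r) ↔
      ∑ i, r i = 0 ∧ ∀ S, ∑ i ∈ S, r i ≤ cutCapacity tl hd a b S := by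
  constructor
  · rintro ⟨x, hax, hxb, rfl⟩
    refine ⟨?_, fun S => (sum_netOutflow tl hd x S).trans_le (cutCapacity_mono tl hd hax hxb S)⟩
    rw [sum_netOutflow, cutCapacity_univ]
  · rintro ⟨hr, hcut⟩
    exact exists_netOutflow_eq_of_forall_sum_le_cutCapacity tl hd hr hab hcut

def cutSlack (a b : E → ℤ) (r : V → ℤ) (S : Finset V) : ℤ :=
  cutCapacity tl hd a b S - ∑ i ∈ S, r i

lemma cutSlack_union {G : SimpleGraph V} (harc : ∀ e, tl e ≠ hd e → G.Adj (tl e) (hd e))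
    (a b : E → ℤ) (r : V → ℤ) {A B : Finset V} (hAB : Disjoint A B)
    (hno : ∀ u ∈ A, ∀ v ∈ B, ¬ G.Adj u v) :
    cutSlack tl hd a b r (A ∪ B) = cutSlack tl hd a b r A + cutSlack tl hd a b r B := by
  have hne : ∀ {u v}, u ∈ A → v ∈ B → u ≠ v := fun hu hv h =>
    Finset.disjoint_left.1 hAB hu (h ▸ hv)
  have harcAB : ∀ e, ¬ (tl e ∈ A ∧ hd e ∈ B) := fun e ⟨hu, hv⟩ =>
    hno _ hu _ hv (harc e (hne hu hv))
  have harcBA : ∀ e, ¬ (tl e ∈ B ∧ hd e ∈ A) := fun e ⟨hu, hv⟩ =>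
    hno _ hv _ hu (harc e (hne hv hu).symm).symm
  simp only [cutSlack, cutCapacity, arcCapacity_union hAB (harcAB _) (harcBA _),
    Finset.sum_add_distrib, Finset.sum_union hAB]
  ring

lemma cutSlack_compl [Fintype V] (a b : E → ℤ) {r : V → ℤ} (hr : ∑ i, r i = 0) (S : Finset V) :
    cutSlack tl hd a b r Sᶜ = cutSlack hd tl a b (-r) S := by
  have hsum : ∑ i ∈ Sᶜ, r i = -∑ i ∈ S, r i := by
    linarith [Finset.sum_compl_add_sum S r]
  simp only [cutSlack, cutCapacity, arcCapacity_compl, hsum, Pi.neg_apply, Finset.sum_neg_distrib]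

theorem forall_sum_le_cutCapacity_of_connected_induce [Fintype V] {G : SimpleGraph V}
    (hG : G.Preconnected) (harc : ∀ e, tl e ≠ hd e → G.Adj (tl e) (hd e)) {a b : E → ℤ}
    {r : V → ℤ} (hr : ∑ i, r i = 0)
    (h : ∀ I : Finset V, (G.induce (I : Set V)).Connected → (G.induce (I : Set V)ᶜ).Connected →
      ∑ i ∈ I, r i ≤ cutCapacity tl hd a b I)
    (S : Finset V) : ∑ i ∈ S, r i ≤ cutCapacity tl hd a b S := by
  -- Complementation turns the slack into that of the reversed network with demand `-r`.
  have harc_rev : ∀ e, hd e ≠ tl e → G.Adj (hd e) (tl e) := fun e he => (harc e he.symm).symm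
  refine sub_nonneg.1 (hG.nonneg_of_nonneg_of_induce_connected (g := cutSlack tl hd a b r)
    (fun A B hAB hno => cutSlack_union tl hd harc a b r hAB hno) (fun A B hAB hno => ?_)
    (fun I h₁ h₂ => sub_nonneg.2 (h I h₁ h₂)) S)
  rw [cutSlack_compl tl hd a b hr, cutSlack_compl tl hd a b hr, cutSlack_compl tl hd a b hr,
    cutSlack_union hd tl harc_rev a b (-r) hAB hno]

end Network

theorem oriented_landau_general {n : ℕ} (D : Fin n → Fin n → Prop)
    (hconn : (SimpleGraph.fromRel D).Connected)
    (r : Fin n → ℤ) (a b : {p : Fin n × Fin n // D p.1 p.2} → ℤ) (hab : ∀ e, a e ≤ b e) :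
    (∃ x : {p : Fin n × Fin n // D p.1 p.2} → ℤ, (∀ e, a e ≤ x e ∧ x e ≤ b e) ∧
        r = ∑ e : {p : Fin n × Fin n // D p.1 p.2}, x e • arcVecZ e.1.1 e.1.2) ↔
      ((∑ i, r i) = 0 ∧
        ∀ I : Finset (Fin n), I.Nonempty → I ≠ Finset.univ →
          ((SimpleGraph.fromRel D).induce (I : Set (Fin n))).Connected →
          ((SimpleGraph.fromRel D).induce ((I : Set (Fin n))ᶜ)).Connected →
          ∑ i ∈ I, r i ≤
            (∑ e : {p : Fin n × Fin n // D p.1 p.2},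
              if e.1.1 ∈ I ∧ e.1.2 ∉ I then b e else 0) -
            (∑ e : {p : Fin n × Fin n // D p.1 p.2},
              if e.1.1 ∉ I ∧ e.1.2 ∈ I then a e else 0)) := by
  have harc : ∀ e : {p : Fin n × Fin n // D p.1 p.2}, e.1.1 ≠ e.1.2 →
      (SimpleGraph.fromRel D).Adj e.1.1 e.1.2 :=
    fun e he => (SimpleGraph.fromRel_adj D _ _).2 ⟨he, Or.inl e.2⟩
  have hflow : ∀ x : {p : Fin n × Fin n // D p.1 p.2} → ℤ,
      ∑ e, x e • arcVecZ e.1.1 e.1.2 = netOutflow (fun e => e.1.1) (fun e => e.1.2) x := fun x => by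
    simp only [netOutflow, arcVecZ_eq_single_sub_single]
  simp only [hflow, eq_comm (a := r), forall_and, ← Pi.le_def, and_assoc, ← Finset.sum_sub_distrib]
  rw [exists_netOutflow_eq_iff _ _ hab r]
  refine and_congr_right fun hr => ⟨fun h I _ _ _ _ => h I, fun h S => ?_⟩
  refine forall_sum_le_cutCapacity_of_connected_induce _ _ hconn.preconnected harc hr
    (fun I h₁ h₂ => h I ?_ ?_ h₁ h₂) S
  · obtain ⟨⟨v, hv⟩⟩ := h₁.nonempty
    exact ⟨v, hv⟩
  · obtain ⟨⟨v, hv⟩⟩ := h₂.nonempty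
    rintro rfl
    exact hv (by simp)

/-- **Theorem 4.8**: for a connected oriented graph `D` on `{1,…,n}` and integers
`r_i`, `a_e ≤ b_e`, there exist integers `a_e ≤ x_e ≤ b_e` with
`∑ r_i f_i = ∑ x_e w(e)` iff conditions (1) and (2) hold. -/
theorem oriented_landau {n : ℕ} (D : Fin n → Fin n → Prop)
    (hloop : ∀ i, ¬ D i i) (hmult : ∀ i j, D i j → ¬ D j i)
    (hconn : (SimpleGraph.fromRel D).Connected)
    (r : Fin n → ℤ) (a b : {p : Fin n × Fin n // D p.1 p.2} → ℤ) (hab : ∀ e, a e ≤ b e) :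
    (∃ x : {p : Fin n × Fin n // D p.1 p.2} → ℤ, (∀ e, a e ≤ x e ∧ x e ≤ b e) ∧
        r = ∑ e : {p : Fin n × Fin n // D p.1 p.2}, x e • arcVecZ e.1.1 e.1.2) ↔
      ((∑ i, r i) = 0 ∧
        ∀ I : Finset (Fin n), I.Nonempty → I ≠ Finset.univ →
          ((SimpleGraph.fromRel D).induce (I : Set (Fin n))).Connected →
          ((SimpleGraph.fromRel D).induce ((I : Set (Fin n))ᶜ)).Connected →
          ∑ i ∈ I, r i ≤
            (∑ e : {p : Fin n × Fin n // D p.1 p.2},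
              if e.1.1 ∈ I ∧ e.1.2 ∉ I then b e else 0) -
            (∑ e : {p : Fin n × Fin n // D p.1 p.2},
              if e.1.1 ∉ I ∧ e.1.2 ∈ I then a e else 0)) :=
  oriented_landau_general D hconn r a b hab
end
end

section
/- A nonincreasing sequence (d_1,...,d_n) of integers is a signed graphical sequence if and only if: (1) d_1 + ⋯ + d_n = 0; and (2) for every natural number l with 1 ≤ l ≤ n, one has Σ_{i=1}^l d_i ≤ l(n−l). -/
/-!
Encode an oriented graph by its skew-symmetric adjacency matrix `A` with entries in `{-1, 0, 1}`,
so that the total degrees are `A *ᵥ 1`. Necessity: on the first `l` vertices the entries cancel,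
and each of the `l (n - l)` entries leading out of them is at most `1`.

Sufficiency: the conditions say that `d` is majorised by the staircase `(n - 1, n - 3, …, 1 - n)`,
which is realised by the transitive tournament. Realisable sequences are closed under moving a unit
from a larger entry to a smaller one (re-route one arc or tie along a path `v → k → w`). The gaps
`l (n - l) - (d 0 + ⋯ + d (l - 1))` are nonnegative; lowering a maximal run of positive gaps by one
yields a nonincreasing sequence from which `d` arises by such a move, so induction on the total gap
finishes the proof.
-/

open scoped Classical

noncomputable section

/-- The total degree `d⁰(i) = d⁺(i) - d⁻(i)` of vertex `i` in the oriented graph with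
arc relation `R`. -/
def totalDeg {n : ℕ} (R : Fin n → Fin n → Prop) (i : Fin n) : ℤ :=
  ((Finset.univ.filter fun j => R i j).card : ℤ) -
    ((Finset.univ.filter fun j => R j i).card : ℤ)

open Finset Matrix

section SignedGraphical

variable {ι : Type*}

/-- An oriented graph on `ι`, encoded by the skew-symmetric matrix with `A i j = 1` for an arc
`i → j`, `A i j = -1` for an arc `j → i` and `A i j = 0` otherwise. -/
def IsSignedAdjMatrix (A : Matrix ι ι ℤ) : Prop :=
  Aᵀ = -A ∧ ∀ i j, |A i j| ≤ 1

def IsSignedGraphical [Fintype ι] (d : ι → ℤ) : Prop :=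
  ∃ A : Matrix ι ι ℤ, IsSignedAdjMatrix A ∧ A *ᵥ 1 = d

lemma mulVec_one_apply [Fintype ι] (A : Matrix ι ι ℤ) (i : ι) : (A *ᵥ 1) i = ∑ j, A i j := by
  simp [mulVec, dotProduct]

lemma IsSignedAdjMatrix.apply_swap {A : Matrix ι ι ℤ} (hA : IsSignedAdjMatrix A) (i j : ι) :
    A j i = -A i j :=
  congrFun (congrFun hA.1 i) j

lemma sum_sum_eq_zero_of_transpose_eq_neg {A : Matrix ι ι ℤ} (hA : Aᵀ = -A) (s : Finset ι) :
    ∑ i ∈ s, ∑ j ∈ s, A i j = 0 := by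
  have hswap : ∑ i ∈ s, ∑ j ∈ s, A i j = -∑ i ∈ s, ∑ j ∈ s, A i j := by
    calc ∑ i ∈ s, ∑ j ∈ s, A i j = ∑ j ∈ s, ∑ i ∈ s, A i j := sum_comm
      _ = ∑ j ∈ s, ∑ i ∈ s, -A j i :=
          sum_congr rfl fun j _ => sum_congr rfl fun i _ => congrFun (congrFun hA j) i
      _ = -∑ i ∈ s, ∑ j ∈ s, A i j := by simp only [sum_neg_distrib]
  linarith

lemma IsSignedAdjMatrix.sub_single_add_single [DecidableEq ι] {A : Matrix ι ι ℤ}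
    (hA : IsSignedAdjMatrix A) {v w : ι} (hvw : 0 ≤ A v w) :
    IsSignedAdjMatrix (A - single v w 1 + single w v 1) := by
  refine ⟨?_, fun i j => ?_⟩
  · simp only [transpose_add, transpose_sub, transpose_single, hA.1]
    abel
  · have hswap := hA.apply_swap v w
    have hij := abs_le.mp (hA.2 i j)
    rw [abs_le]
    simp only [Matrix.add_apply, Matrix.sub_apply, single_apply]
    split_ifs with h₁ h₂ h₂
    · omega
    · obtain ⟨rfl, rfl⟩ := h₁
      omega
    · obtain ⟨rfl, rfl⟩ := h₂
      omega
    · omega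

theorem exists_orientation_iff_isSignedGraphical {n : ℕ} (d : Fin n → ℤ) :
    (∃ R : Fin n → Fin n → Prop, (∀ i, ¬ R i i) ∧ (∀ i j, R i j → ¬ R j i) ∧
        ∀ i, d i = totalDeg R i) ↔ IsSignedGraphical d := by
  constructor
  · rintro ⟨R, -, hasymm, hdeg⟩
    refine ⟨of fun i j => (if R i j then 1 else 0) - if R j i then 1 else 0, ⟨?_, ?_⟩, ?_⟩
    · ext i j
      simp
    · intro i j
      by_cases hij : R i j
      · simp [hij, hasymm i j hij]
      · simp only [of_apply]
        split_ifs <;> simp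
    · ext i
      simp [mulVec_one_apply, hdeg i, totalDeg, sum_sub_distrib, sum_boole]
  · rintro ⟨A, hA, rfl⟩
    refine ⟨fun i j => A i j = 1, fun i h => ?_, fun i j h h' => ?_, fun i => ?_⟩
    · have := hA.apply_swap i i
      omega
    · have := hA.apply_swap i j
      omega
    · have hentry : ∀ j, A i j = (if A i j = 1 then 1 else 0) - if A j i = 1 then 1 else 0 := by
        intro j
        have := hA.apply_swap i j
        have := abs_le.mp (hA.2 i j)
        split_ifs <;> omega
      rw [mulVec_one_apply, sum_congr rfl fun j _ => hentry j, sum_sub_distrib, sum_boole,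
        sum_boole, totalDeg]
      congr

variable [Fintype ι] {d : ι → ℤ}

theorem IsSignedGraphical.sum_eq_zero (h : IsSignedGraphical d) : ∑ i, d i = 0 := by
  obtain ⟨A, hA, rfl⟩ := h
  simpa [mulVec_one_apply] using sum_sum_eq_zero_of_transpose_eq_neg hA.1 univ

theorem IsSignedGraphical.sum_le (h : IsSignedGraphical d) (s : Finset ι) :
    ∑ i ∈ s, d i ≤ #s * (Fintype.card ι - #s : ℤ) := by
  obtain ⟨A, hA, rfl⟩ := h
  have hsplit : ∑ i ∈ s, (A *ᵥ 1) i = ∑ i ∈ s, ∑ j ∈ sᶜ, A i j := by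
    simp only [mulVec_one_apply, ← sum_add_sum_compl s, sum_add_distrib,
      sum_sum_eq_zero_of_transpose_eq_neg hA.1, zero_add]
  calc ∑ i ∈ s, (A *ᵥ 1) i = ∑ i ∈ s, ∑ j ∈ sᶜ, A i j := hsplit
    _ ≤ ∑ i ∈ s, ∑ j ∈ sᶜ, (1 : ℤ) :=
        sum_le_sum fun i _ => sum_le_sum fun j _ => (abs_le.mp (hA.2 i j)).2
    _ = #s * (Fintype.card ι - #s : ℤ) := by
        simp [card_compl, Nat.cast_sub (card_le_univ s), mul_sub]

variable [DecidableEq ι]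

lemma sub_single_add_single_mulVec_one (A : Matrix ι ι ℤ) (v w : ι) :
    (A - single v w 1 + single w v 1) *ᵥ 1 = A *ᵥ 1 - Pi.single v 1 + Pi.single w 1 := by
  simp only [add_mulVec, sub_mulVec, single_mulVec, Pi.one_apply, mul_one]
  rfl

theorem IsSignedGraphical.sub_single_add_single (h : IsSignedGraphical d) {v w : ι}
    (hvw : d w < d v) : IsSignedGraphical (d - Pi.single v 1 + Pi.single w 1) := by
  obtain ⟨A, hA, rfl⟩ := h
  obtain ⟨k, -, hk⟩ := exists_lt_of_sum_lt (s := univ) (f := fun k => A w k) (g := fun k => A v k)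
    (by simpa only [mulVec_one_apply] using hvw)
  have hvk := abs_le.mp (hA.2 v k)
  have hwk := abs_le.mp (hA.2 w k)
  have hkw := hA.apply_swap w k
  -- shift one unit along `v → k → w`; when `k = v` or `k = w` one of the two shifts is trivial
  have hB := hA.sub_single_add_single (v := v) (w := k) (by omega)
  have hBkw : 0 ≤ (A - single v k 1 + single k v 1 : Matrix ι ι ℤ) k w := by
    have hne : v ≠ w := by rintro rfl; exact lt_irrefl _ hvw
    simp only [Matrix.add_apply, Matrix.sub_apply, single_apply, hne, and_false, if_false]
    split_ifs with h
    · exact absurd (h.1.trans h.2) hne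
    · omega
  refine ⟨_, hB.sub_single_add_single hBkw, ?_⟩
  rw [sub_single_add_single_mulVec_one, sub_single_add_single_mulVec_one]
  abel

end SignedGraphical

theorem isSignedGraphical_card_Ioi_sub_card_Iio {α : Type*} [LinearOrder α] [Fintype α]
    [LocallyFiniteOrderTop α] [LocallyFiniteOrderBot α] :
    IsSignedGraphical fun i : α => (#(Ioi i) - #(Iio i) : ℤ) := by
  refine ⟨of fun i j => (if i < j then 1 else 0) - if j < i then 1 else 0, ⟨?_, fun i j => ?_⟩, ?_⟩
  · ext i j
    simp
  · by_cases h : i < j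
    · simp [h, not_lt_of_gt h]
    · simp only [of_apply]
      split_ifs <;> simp
  · ext i
    simp [mulVec_one_apply, sum_sub_distrib, sum_boole, filter_lt_eq_Ioi, filter_gt_eq_Iio]

theorem isSignedGraphical_staircase (n : ℕ) :
    IsSignedGraphical fun i : Fin n => (n - 1 - 2 * i : ℤ) := by
  convert isSignedGraphical_card_Ioi_sub_card_Iio (α := Fin n) using 2 with i
  rw [Fin.card_Ioi, Fin.card_Iio, Nat.sub_sub, Nat.cast_sub (by omega)]
  push_cast
  ring

section StaircaseGap

variable {n : ℕ} {c : ℕ → ℤ}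

/-- `c l` stands for `l (n - l) - (d 0 + ⋯ + d (l - 1))`, the amount by which the prefix sums of a
sequence `d` fall short of those of the staircase `(n - 1, n - 3, …, 1 - n)`; the last condition
says that `d` is nonincreasing. -/
structure IsStaircaseGap (n : ℕ) (c : ℕ → ℤ) : Prop where
  zero : c 0 = 0
  self : c n = 0
  nonneg : ∀ l ≤ n, 0 ≤ c l
  concave : ∀ l, l + 2 ≤ n → 2 * c (l + 1) ≤ c l + c (l + 2) + 2

def ofStaircaseGap (n : ℕ) (c : ℕ → ℤ) (i : Fin n) : ℤ :=
  n - 1 - 2 * i - (c (i + 1) - c i)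

lemma IsStaircaseGap.antitone (hc : IsStaircaseGap n c) : Antitone (ofStaircaseGap n c) := by
  cases n with
  | zero => exact fun i => i.elim0
  | succ m =>
    refine Fin.antitone_iff_succ_le.mpr fun i => ?_
    have := hc.concave i (by omega)
    simp only [ofStaircaseGap, Fin.val_succ, Fin.val_castSucc]
    push_cast
    linarith

lemma exists_maximal_nonzero_run {c : ℕ → ℤ} {n j : ℕ} (h₀ : c 0 = 0) (hn : c n = 0)
    (hjn : j ≤ n) (hj : c j ≠ 0) :
    ∃ v t, v + 1 < t ∧ t ≤ n ∧ c v = 0 ∧ c t = 0 ∧ ∀ l, v < l → l < t → c l ≠ 0 := by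
  have hjn' : j < n := lt_of_le_of_ne hjn (by rintro rfl; exact hj hn)
  have ht : ∃ t, j < t ∧ c t = 0 := ⟨n, hjn', hn⟩
  have hv : c (Nat.findGreatest (c · = 0) j) = 0 :=
    Nat.findGreatest_spec (P := (c · = 0)) (Nat.zero_le j) h₀
  have hvj : Nat.findGreatest (c · = 0) j < j :=
    lt_of_le_of_ne (Nat.findGreatest_le j) fun h => hj (h ▸ hv)
  have hjt := (Nat.find_spec ht).1
  refine ⟨_, Nat.find ht, by omega, Nat.find_min' ht ⟨hjn', hn⟩, hv,
    (Nat.find_spec ht).2, fun l hvl hlt => ?_⟩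
  rcases le_or_gt l j with hlj | hjl
  · exact Nat.findGreatest_is_greatest hvl hlj
  · exact fun hl => Nat.find_min ht hlt ⟨hjl, hl⟩

variable {v t : ℕ}

lemma IsStaircaseGap.sub_indicator (hc : IsStaircaseGap n c) (htn : t ≤ n) (hv : c v = 0)
    (ht : c t = 0) (hrun : ∀ l, v < l → l < t → c l ≠ 0) :
    IsStaircaseGap n (c - (Set.Ioo v t).indicator 1) := by
  have hpos : ∀ l ∈ Set.Ioo v t, 1 ≤ c l := fun l hl =>
    lt_of_le_of_ne (hc.nonneg l (by linarith [hl.2])) (hrun l hl.1 hl.2).symm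
  have hnonneg : ∀ l ≤ n, 0 ≤ (c - (Set.Ioo v t).indicator 1 : ℕ → ℤ) l := by
    intro l hl
    by_cases hlvt : l ∈ Set.Ioo v t
    · simpa [hlvt] using hpos l hlvt
    · simpa [hlvt] using hc.nonneg l hl
  refine ⟨by simp [hc.zero], by simp [hc.self, htn.not_gt], hnonneg, fun l hl => ?_⟩
  have hconc := hc.concave l hl
  by_cases hmid : l + 1 ∈ Set.Ioo v t
  · simp only [Pi.sub_apply, Set.indicator_apply, hmid, if_true, Pi.one_apply]
    split_ifs <;> omega
  · by_cases hend : l + 1 = v ∨ l + 1 = t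
    · -- the run is bounded by zeros of `c`, where concavity has slack
      have hzero : c (l + 1) = 0 := by rcases hend with h | h <;> rw [h] <;> assumption
      have := hnonneg l (by omega)
      have := hnonneg (l + 2) hl
      simp only [Pi.sub_apply, Set.indicator_apply, hmid, if_false] at *
      omega
    · have hout : l ∉ Set.Ioo v t ∧ l + 2 ∉ Set.Ioo v t := by
        simp only [Set.mem_Ioo] at hmid ⊢
        omega
      simpa [hmid, hout.1, hout.2] using hconc

lemma ofStaircaseGap_sub_indicator (hvt : v + 1 < t) (htn : t ≤ n) :
    ofStaircaseGap n (c - (Set.Ioo v t).indicator 1) =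
      ofStaircaseGap n c + Pi.single ⟨v, by omega⟩ 1 - Pi.single ⟨t - 1, by omega⟩ 1 := by
  ext i
  simp only [ofStaircaseGap, Pi.add_apply, Pi.sub_apply, Set.indicator_apply, Set.mem_Ioo,
    Pi.one_apply, Pi.single_apply, Fin.ext_iff]
  split_ifs <;> omega

lemma sum_sub_indicator_lt (hvt : v + 1 < t) (htn : t ≤ n) :
    ∑ l ∈ range (n + 1), (c - (Set.Ioo v t).indicator 1 : ℕ → ℤ) l <
      ∑ l ∈ range (n + 1), c l := by
  refine sum_lt_sum (fun l _ => ?_) ⟨v + 1, mem_range.mpr (by omega), ?_⟩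
  · by_cases hl : l ∈ Set.Ioo v t <;> simp [hl]
  · simp [Set.mem_Ioo, hvt]

theorem IsStaircaseGap.isSignedGraphical {c : ℕ → ℤ} (hc : IsStaircaseGap n c) :
    IsSignedGraphical (ofStaircaseGap n c) := by
  by_cases hzero : ∀ l ≤ n, c l = 0
  · convert isSignedGraphical_staircase n using 2 with i
    simp [ofStaircaseGap, hzero i (by omega), hzero (i + 1) (by omega)]
  push Not at hzero
  obtain ⟨j, hjn, hj⟩ := hzero
  obtain ⟨v, t, hvt, htn, hv, ht, hrun⟩ := exists_maximal_nonzero_run hc.zero hc.self hjn hj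
  have hc' := hc.sub_indicator htn hv ht hrun
  have hlt := sum_sub_indicator_lt (c := c) hvt htn
  have hle : ofStaircaseGap n c ⟨t - 1, by omega⟩ ≤ ofStaircaseGap n c ⟨v, by omega⟩ :=
    hc.antitone (Fin.mk_le_mk.mpr (by omega))
  have hne : (⟨t - 1, by omega⟩ : Fin n) ≠ ⟨v, by omega⟩ := by rw [ne_eq, Fin.mk.injEq]; omega
  have key := (IsStaircaseGap.isSignedGraphical hc').sub_single_add_single
    (v := ⟨v, by omega⟩) (w := ⟨t - 1, by omega⟩) (by
    rw [ofStaircaseGap_sub_indicator hvt htn]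
    simp only [Pi.add_apply, Pi.sub_apply, Pi.single_eq_same, Pi.single_eq_of_ne hne,
      Pi.single_eq_of_ne hne.symm]
    omega)
  rw [ofStaircaseGap_sub_indicator hvt htn] at key
  convert key using 1
  abel
termination_by (∑ l ∈ range (n + 1), c l).toNat
decreasing_by
  have : 0 ≤ ∑ l ∈ range (n + 1), (c - (Set.Ioo v t).indicator 1 : ℕ → ℤ) l :=
    sum_nonneg fun l hl => hc'.nonneg l (by simpa [Nat.lt_succ_iff] using hl)
  omega

end StaircaseGap

section PrefixSum

variable {n : ℕ} (d : Fin n → ℤ)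

def prefixSum (l : ℕ) : ℤ :=
  ∑ i ∈ univ.filter (fun i : Fin n => (i : ℕ) < l), d i

def staircaseGap (l : ℕ) : ℤ :=
  l * (n - l) - prefixSum d l

lemma prefixSum_zero : prefixSum d 0 = 0 := by
  simp [prefixSum]

lemma prefixSum_succ {l : ℕ} (hl : l < n) : prefixSum d (l + 1) = prefixSum d l + d ⟨l, hl⟩ := by
  have hfilter : univ.filter (fun i : Fin n => (i : ℕ) < l + 1) =
      insert ⟨l, hl⟩ (univ.filter fun i : Fin n => (i : ℕ) < l) := by
    ext i
    simp only [Order.lt_add_one_iff, mem_filter, mem_univ, true_and, mem_insert, Fin.ext_iff]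
    omega
  rw [prefixSum, hfilter, sum_insert (by simp), add_comm, prefixSum]

lemma prefixSum_self : prefixSum d n = ∑ i, d i := by
  simp [prefixSum]

lemma ofStaircaseGap_staircaseGap : ofStaircaseGap n (staircaseGap d) = d := by
  ext i
  simp only [ofStaircaseGap, staircaseGap, prefixSum_succ d i.isLt]
  push_cast
  ring

variable {d}

theorem IsSignedGraphical.prefixSum_le (h : IsSignedGraphical d) {l : ℕ} (hl : l ≤ n) :
    prefixSum d l ≤ l * (n - l) := by
  simpa [prefixSum, Fin.card_filter_val_lt, hl] using
    h.sum_le (univ.filter fun i : Fin n => (i : ℕ) < l)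

lemma isStaircaseGap_staircaseGap (hd : Antitone d) (hsum : ∑ i, d i = 0)
    (hle : ∀ l, 1 ≤ l → l ≤ n → prefixSum d l ≤ l * (n - l)) :
    IsStaircaseGap n (staircaseGap d) := by
  refine ⟨by simp [staircaseGap, prefixSum_zero], by simp [staircaseGap, prefixSum_self, hsum],
    fun l hl => ?_, fun l hl => ?_⟩
  · rcases Nat.eq_zero_or_pos l with rfl | hl₀
    · simp [staircaseGap, prefixSum_zero]
    · simpa [staircaseGap] using hle l hl₀ hl
  · have hdl : d ⟨l + 1, by omega⟩ ≤ d ⟨l, by omega⟩ := hd (Fin.mk_le_mk.mpr (by omega))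
    simp only [staircaseGap, prefixSum_succ d (show l + 1 < n by omega),
      prefixSum_succ d (show l < n by omega)]
    push_cast
    linarith

end PrefixSum

/-- **Corollary 4.9**: a nonincreasing sequence `(d_1,…,d_n)` of integers is a signed
graphical sequence (i.e. the total-degree sequence of some oriented graph on `n`
vertices) iff `d_1 + ⋯ + d_n = 0` and `∑_{i=1}^l d_i ≤ l (n - l)` for every `1 ≤ l ≤ n`. -/
theorem signed_graphical_sequence {n : ℕ} (d : Fin n → ℤ)
    (hmono : ∀ i j : Fin n, i ≤ j → d j ≤ d i) :
    (∃ R : Fin n → Fin n → Prop, (∀ i, ¬ R i i) ∧ (∀ i j, R i j → ¬ R j i) ∧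
        ∀ i, d i = totalDeg R i) ↔
      ((∑ i, d i) = 0 ∧
        ∀ l : ℕ, 1 ≤ l → l ≤ n →
          ∑ i ∈ Finset.univ.filter (fun i : Fin n => (i : ℕ) < l), d i ≤
            (l : ℤ) * ((n : ℤ) - (l : ℤ))) := by
  rw [exists_orientation_iff_isSignedGraphical]
  refine ⟨fun h => ⟨h.sum_eq_zero, fun l _ hl => h.prefixSum_le hl⟩, fun ⟨hsum, hle⟩ => ?_⟩
  rw [← ofStaircaseGap_staircaseGap d]
  exact (isStaircaseGap_staircaseGap hmono hsum hle).isSignedGraphical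
end
end
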